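/- Let R be an algebraic curvature tensor on an n-dimensional Euclidean space, n ≥ 3, with orthonormal basis e_1,…,e_n, and φ_1 = (1/(2√(n(n−1))))((n−1)e_1⊙e_1 − Σ_{p=2}^n e_p⊙e_p). Then R̊(φ_1,φ_1) = (2/(n−1)) Ric_{11} − S/(n(n−1)), where Ric_{11} = Σ_{j} R_{1j1j} is the Ricci curvature in direction e_1 and S = Σ_{i,j} R_{ijij} is the scalar curvature. -/
import Mathlib


open scoped BigOperators

/-- The symmetric product `u ⊙ v = u ⊗ v + v ⊗ u`, as a matrix in standard coordinates. -/
def sym2 {n : ℕ} (u v : Fin n → ℝ) : Matrix (Fin n) (Fin n) ℝ :=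
  Matrix.of fun i j => u i * v j + v i * u j

/-- The inner product `⟨A, B⟩ = tr(Aᵀ B)` on two-tensors. -/
def minner {n : ℕ} (A B : Matrix (Fin n) (Fin n) ℝ) : ℝ :=
  ∑ i, ∑ j, A i j * B i j

/-- The curvature operator of the second kind as a bilinear form on symmetric two-tensors:
`R̊(h₁,h₂) = Σ R_{iklj} (h₁)_{ij} (h₂)_{kl}`. -/
def Rsec {n : ℕ} (R : Fin n → Fin n → Fin n → Fin n → ℝ)
    (h₁ h₂ : Matrix (Fin n) (Fin n) ℝ) : ℝ :=
  ∑ i, ∑ j, ∑ k, ∑ l, R i k l j * h₁ i j * h₂ k l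

/-- Multilinear evaluation of the curvature tensor on vectors. -/
def Rap {n : ℕ} (R : Fin n → Fin n → Fin n → Fin n → ℝ) (u v w x : Fin n → ℝ) : ℝ :=
  ∑ i, ∑ j, ∑ k, ∑ l, R i j k l * u i * v j * w k * x l

/-- An algebraic curvature tensor: antisymmetric in each pair, symmetric in pairs,
first Bianchi identity. -/
def IsAlgCurv {n : ℕ} (R : Fin n → Fin n → Fin n → Fin n → ℝ) : Prop :=
  (∀ i j k l, R i j k l = - R j i k l) ∧ (∀ i j k l, R i j k l = - R i j l k) ∧
  (∀ i j k l, R i j k l = R k l i j) ∧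
  (∀ i j k l, R i j k l + R i k l j + R i l j k = 0)

/-- An orthonormal family of vectors in Euclidean space. -/
def OrthonormalFam {n m : ℕ} (v : Fin m → Fin n → ℝ) : Prop :=
  ∀ a b, (∑ k, v a k * v b k) = if a = b then (1 : ℝ) else 0

/-- `φ₁ = (1/(2√(n(n−1))))((n−1)e₁⊙e₁ − Σ_{p=2}^n e_p⊙e_p)` (0-indexed). -/
noncomputable def phi1n (n : ℕ) (hn : 3 ≤ n) (e : Fin n → Fin n → ℝ) :
    Matrix (Fin n) (Fin n) ℝ :=
  (1/(2*Real.sqrt ((n : ℝ)*((n : ℝ)-1)))) •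
    (((n : ℝ)-1) • sym2 (e ⟨0, by omega⟩) (e ⟨0, by omega⟩)
      - ∑ p ∈ Finset.univ.filter (fun p : Fin n => (p : ℕ) ≠ 0), sym2 (e p) (e p))


lemma rot3 {α β γ : Type*} [Fintype α] [Fintype β] [Fintype γ] (f : α → β → γ → ℝ) :
    (∑ a, ∑ b, ∑ c, f a b c) = ∑ b, ∑ c, ∑ a, f a b c := by
  rw [Finset.sum_comm]
  exact Finset.sum_congr rfl fun b _ => Finset.sum_comm

lemma pull6 {α : Type*} [Fintype α] (F : α → α → α → α → α → α → ℝ) :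
    (∑ i, ∑ j, ∑ k, ∑ l, ∑ p, ∑ q, F i j k l p q)
      = ∑ p, ∑ q, ∑ i, ∑ j, ∑ k, ∑ l, F i j k l p q :=
  calc (∑ i, ∑ j, ∑ k, ∑ l, ∑ p, ∑ q, F i j k l p q)
      = ∑ i, ∑ j, ∑ k, ∑ p, ∑ q, ∑ l, F i j k l p q :=
        Finset.sum_congr rfl fun i _ => Finset.sum_congr rfl fun j _ =>
          Finset.sum_congr rfl fun k _ => rot3 _
    _ = ∑ i, ∑ j, ∑ p, ∑ q, ∑ k, ∑ l, F i j k l p q :=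
        Finset.sum_congr rfl fun i _ => Finset.sum_congr rfl fun j _ => rot3 _
    _ = ∑ i, ∑ p, ∑ q, ∑ j, ∑ k, ∑ l, F i j k l p q :=
        Finset.sum_congr rfl fun i _ => rot3 _
    _ = ∑ p, ∑ q, ∑ i, ∑ j, ∑ k, ∑ l, F i j k l p q := rot3 _

lemma rap_swap12 {n : ℕ} (R : Fin n → Fin n → Fin n → Fin n → ℝ) (hR : IsAlgCurv R)
    (u v w x : Fin n → ℝ) : Rap R u v w x = - Rap R v u w x := by
  have h : Rap R v u w x = - Rap R u v w x := by
    unfold Rap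
    calc (∑ i, ∑ j, ∑ k, ∑ l, R i j k l * v i * u j * w k * x l)
        = ∑ i, ∑ j, ∑ k, ∑ l, R j i k l * v j * u i * w k * x l := Finset.sum_comm
      _ = ∑ i, ∑ j, ∑ k, ∑ l, -(R i j k l * u i * v j * w k * x l) := by
          refine Finset.sum_congr rfl fun i _ => Finset.sum_congr rfl fun j _ =>
            Finset.sum_congr rfl fun k _ => Finset.sum_congr rfl fun l _ => ?_
          rw [hR.1 j i k l]; ring
      _ = - ∑ i, ∑ j, ∑ k, ∑ l, R i j k l * u i * v j * w k * x l := by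
          simp only [← Finset.sum_neg_distrib]
  linarith

lemma rap_swap34 {n : ℕ} (R : Fin n → Fin n → Fin n → Fin n → ℝ) (hR : IsAlgCurv R)
    (u v w x : Fin n → ℝ) : Rap R u v w x = - Rap R u v x w := by
  have h : Rap R u v x w = - Rap R u v w x := by
    unfold Rap
    calc (∑ i, ∑ j, ∑ k, ∑ l, R i j k l * u i * v j * x k * w l)
        = ∑ i, ∑ j, ∑ k, ∑ l, R i j l k * u i * v j * x l * w k :=
          Finset.sum_congr rfl fun i _ => Finset.sum_congr rfl fun j _ => Finset.sum_comm
      _ = ∑ i, ∑ j, ∑ k, ∑ l, -(R i j k l * u i * v j * w k * x l) := by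
          refine Finset.sum_congr rfl fun i _ => Finset.sum_congr rfl fun j _ =>
            Finset.sum_congr rfl fun k _ => Finset.sum_congr rfl fun l _ => ?_
          rw [hR.2.1 i j l k]; ring
      _ = - ∑ i, ∑ j, ∑ k, ∑ l, R i j k l * u i * v j * w k * x l := by
          simp only [← Finset.sum_neg_distrib]
  linarith

lemma inner_eq {n : ℕ} (R : Fin n → Fin n → Fin n → Fin n → ℝ) (a b : ℝ) (u v : Fin n → ℝ) :
    (∑ i, ∑ j, ∑ k, ∑ l, R i k l j * (a * (u i * u j)) * (b * (v k * v l)))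
      = a * b * Rap R u v v u := by
  unfold Rap
  simp only [Finset.mul_sum]
  calc (∑ i, ∑ j, ∑ k, ∑ l, R i k l j * (a * (u i * u j)) * (b * (v k * v l)))
      = ∑ i, ∑ k, ∑ l, ∑ j, R i k l j * (a * (u i * u j)) * (b * (v k * v l)) :=
        Finset.sum_congr rfl fun i _ => rot3 _
    _ = ∑ i, ∑ j, ∑ k, ∑ l, a * b * (R i j k l * u i * v j * v k * u l) := by
        refine Finset.sum_congr rfl fun i _ => Finset.sum_congr rfl fun j _ =>
          Finset.sum_congr rfl fun k _ => Finset.sum_congr rfl fun l _ => ?_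
        ring

/-- for an algebraic curvature tensor on an `n`-dimensional Euclidean space
(`n ≥ 3`) with orthonormal basis `e₁,…,eₙ`,
`R̊(φ₁,φ₁) = (2/(n−1)) Ric₁₁ − S/(n(n−1))` where `Ric₁₁ = Σⱼ R₁ⱼ₁ⱼ` and `S = Σᵢⱼ Rᵢⱼᵢⱼ`. -/
theorem statement_9 (n : ℕ) (hn : 3 ≤ n)
    (R : Fin n → Fin n → Fin n → Fin n → ℝ) (hR : IsAlgCurv R)
    (e : Fin n → Fin n → ℝ) (he : OrthonormalFam e) :
    Rsec R (phi1n n hn e) (phi1n n hn e) =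
      (2/((n : ℝ)-1)) * (∑ j, Rap R (e ⟨0, by omega⟩) (e j) (e ⟨0, by omega⟩) (e j))
        - (∑ i, ∑ j, Rap R (e i) (e j) (e i) (e j)) / ((n : ℝ)*((n : ℝ)-1)) := by
  have hn3 : (3:ℝ) ≤ (n:ℝ) := by exact_mod_cast hn
  have hn0 : (n:ℝ) ≠ 0 := by positivity
  have hn1 : (n:ℝ) - 1 ≠ 0 := by intro h; nlinarith
  have hpos : 0 < (n:ℝ)*((n:ℝ)-1) := by nlinarith
  set z : Fin n := ⟨0, by omega⟩ with hzdef
  set c : ℝ := 1/(2*Real.sqrt ((n : ℝ)*((n : ℝ)-1))) with hc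
  set g : Fin n → ℝ := fun p => if (p:ℕ) = 0 then 2*c*((n : ℝ)-1) else -(2*c) with hg
  have hfilter : (Finset.univ.filter (fun p : Fin n => (p:ℕ) ≠ 0)) = Finset.univ.erase z := by
    ext p
    simp [Fin.ext_iff, hzdef]
  -- Step A : entries of phi1n
  have hA : ∀ i j, phi1n n hn e i j = ∑ p, g p * (e p i * e p j) := by
    intro i j
    simp only [phi1n, Matrix.smul_apply, Matrix.sub_apply, Matrix.sum_apply,
      Matrix.of_apply, sym2, smul_eq_mul, hfilter, ← hc]
    rw [← Finset.sum_erase_add Finset.univ _ (Finset.mem_univ z)]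
    have h1 : ∑ p ∈ Finset.univ.erase z, g p * (e p i * e p j)
        = ∑ p ∈ Finset.univ.erase z, -(2*c) * (e p i * e p j) := by
      refine Finset.sum_congr rfl fun p hp => ?_
      have hp' : (p:ℕ) ≠ 0 := by
        have := Finset.mem_erase.mp hp
        simpa [Fin.ext_iff, hzdef] using this.1
      simp [hg, hp']
    have hgz : g z = 2*c*((n : ℝ)-1) := by simp [hg, hzdef]
    rw [h1, ← Finset.mul_sum, hgz, Finset.sum_add_distrib]
    ring
  -- Step B : bilinear expansion
  have hB0 : Rsec R (phi1n n hn e) (phi1n n hn e)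
      = ∑ p, ∑ q, g q * g p * Rap R (e q) (e p) (e p) (e q) := by
    unfold Rsec
    simp only [hA, Finset.mul_sum, Finset.sum_mul]
    rw [pull6]
    exact Finset.sum_congr rfl fun p _ => Finset.sum_congr rfl fun q _ =>
      inner_eq R (g q) (g p) (e q) (e p)
  have hB : Rsec R (phi1n n hn e) (phi1n n hn e)
      = ∑ p, ∑ q, g p * g q * Rap R (e p) (e q) (e q) (e p) :=
    hB0.trans Finset.sum_comm
  -- key summation lemma
  have key : ∀ B : Fin n → ℝ,
      (∑ p, g p * B p) = 2*c*(n:ℝ) * B z - 2*c * (∑ p, B p) := by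
    intro B
    have h1 : ∀ p : Fin n, g p * B p
        = (if p = z then 2*c*(n:ℝ) * B p else 0) - 2*c * B p := by
      intro p
      by_cases hp : p = z
      · subst hp; simp [hg, hzdef]; ring
      · have hp' : (p:ℕ) ≠ 0 := by
          intro h0
          exact hp (Fin.ext (by simpa [hzdef] using h0))
        simp [hg, hp', hp]
    rw [Finset.sum_congr rfl (fun p _ => h1 p), Finset.sum_sub_distrib,
      Finset.sum_ite_eq' Finset.univ z (fun x => 2*c*(n:ℝ) * B x), ← Finset.mul_sum]
    simp
  -- curvature symmetries
  have e0 : Rap R (e z) (e z) (e z) (e z) = 0 := by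
    have := rap_swap12 R hR (e z) (e z) (e z) (e z)
    linarith
  have e1 : (∑ p, Rap R (e p) (e z) (e z) (e p))
      = - ∑ j, Rap R (e z) (e j) (e z) (e j) := by
    rw [← Finset.sum_neg_distrib]
    refine Finset.sum_congr rfl fun p _ => ?_
    have h1 := rap_swap34 R hR (e p) (e z) (e z) (e p)
    have h2 := rap_swap12 R hR (e z) (e p) (e p) (e z)
    have h3 := rap_swap34 R hR (e z) (e p) (e z) (e p)
    linarith
  have e2 : (∑ q, Rap R (e z) (e q) (e q) (e z))
      = - ∑ j, Rap R (e z) (e j) (e z) (e j) := by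
    rw [← Finset.sum_neg_distrib]
    refine Finset.sum_congr rfl fun q _ => ?_
    have h1 := rap_swap34 R hR (e z) (e q) (e q) (e z)
    linarith
  have e3 : (∑ p, ∑ q, Rap R (e p) (e q) (e q) (e p))
      = - ∑ i, ∑ j, Rap R (e i) (e j) (e i) (e j) := by
    rw [← Finset.sum_neg_distrib]
    refine Finset.sum_congr rfl fun p _ => ?_
    rw [← Finset.sum_neg_distrib]
    refine Finset.sum_congr rfl fun q _ => ?_
    have h1 := rap_swap34 R hR (e p) (e q) (e q) (e p)
    linarith
  -- arithmetic about c
  have hs : Real.sqrt ((n:ℝ)*((n:ℝ)-1)) * Real.sqrt ((n:ℝ)*((n:ℝ)-1)) = (n:ℝ)*((n:ℝ)-1) :=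
    Real.mul_self_sqrt (le_of_lt hpos)
  have hs0 : Real.sqrt ((n:ℝ)*((n:ℝ)-1)) ≠ 0 := ne_of_gt (Real.sqrt_pos.mpr hpos)
  have hden : (2*Real.sqrt ((n:ℝ)*((n:ℝ)-1))) * (2*Real.sqrt ((n:ℝ)*((n:ℝ)-1)))
      = 4*((n:ℝ)*((n:ℝ)-1)) := by linear_combination 4*hs
  have hM : (n:ℝ)*((n:ℝ)-1) ≠ 0 := ne_of_gt hpos
  have hc2 : 4*(c*c)*((n:ℝ)*((n:ℝ)-1)) = 1 := by
    rw [hc, div_mul_div_comm, one_mul, hden]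
    field_simp
  clear_value c
  -- main chain
  calc Rsec R (phi1n n hn e) (phi1n n hn e)
      = ∑ p, ∑ q, g p * g q * Rap R (e p) (e q) (e q) (e p) := hB
    _ = ∑ p, g p * ∑ q, g q * Rap R (e p) (e q) (e q) (e p) :=
        Finset.sum_congr rfl fun p _ => by
          rw [Finset.mul_sum]
          exact Finset.sum_congr rfl fun q _ => (mul_assoc _ _ _)
    _ = ∑ p, g p * (2*c*(n:ℝ) * Rap R (e p) (e z) (e z) (e p)
          - 2*c * (∑ q, Rap R (e p) (e q) (e q) (e p))) :=
        Finset.sum_congr rfl fun p _ => by rw [key]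
    _ = 2*c*(n:ℝ) * (∑ p, g p * Rap R (e p) (e z) (e z) (e p))
          - 2*c * (∑ p, g p * (∑ q, Rap R (e p) (e q) (e q) (e p))) := by
        rw [Finset.mul_sum, Finset.mul_sum, ← Finset.sum_sub_distrib]
        exact Finset.sum_congr rfl fun p _ => by ring
    _ = 2*c*(n:ℝ) * (2*c*(n:ℝ) * Rap R (e z) (e z) (e z) (e z)
            - 2*c * (∑ p, Rap R (e p) (e z) (e z) (e p)))
          - 2*c * (2*c*(n:ℝ) * (∑ q, Rap R (e z) (e q) (e q) (e z))
            - 2*c * (∑ p, ∑ q, Rap R (e p) (e q) (e q) (e p))) := by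
        rw [key, key]
    _ = 2*c*(n:ℝ) * (2*c*(n:ℝ) * 0
            - 2*c * (- ∑ j, Rap R (e z) (e j) (e z) (e j)))
          - 2*c * (2*c*(n:ℝ) * (- ∑ j, Rap R (e z) (e j) (e z) (e j))
            - 2*c * (- ∑ i, ∑ j, Rap R (e i) (e j) (e i) (e j))) := by
        rw [e0, e1, e2, e3]
    _ = (2/((n : ℝ)-1)) * (∑ j, Rap R (e z) (e j) (e z) (e j))
        - (∑ i, ∑ j, Rap R (e i) (e j) (e i) (e j)) / ((n : ℝ)*((n : ℝ)-1)) := by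
        have h2n : 2/((n:ℝ)-1) = 8*(c*c)*(n:ℝ) := by
          rw [div_eq_iff hn1]
          linear_combination (-2 : ℝ)*hc2
        have hinv : ((n:ℝ)*((n:ℝ)-1))⁻¹ = 4*(c*c) := by
          rw [inv_eq_one_div, div_eq_iff hM]
          linear_combination (-1 : ℝ)*hc2
        rw [h2n, div_eq_mul_inv, hinv]
        ring
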